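/- arXiv:2206.00792 — 4 statements merged into one kernel-verified Lean document; each statement's English description precedes it below -/
import Mathlib

section
/- Let 𝒮 be finite, let μ be the joint probability mass function of random variables Z_𝒮 = {Z_s}_{s∈𝒮} on finite alphabets, and for 𝒮' ⊆ 𝒮 let μ_{𝒮'} denote the marginal of μ on the coordinates 𝒮' (with μ_∅ ≡ 1). Then the following are equivalent: (i) for every ℐ' ∈ 𝔍, setting C = 𝒮(ℐ'), B = (⋂_{i∈ℐ'} 𝒮(i)) ∩ 𝒮(ℐ')^∁ and A = (⋂_{i∈ℐ'} 𝒮(i))^∁ ∩ (⋃_{ℐ''∈𝔍 : ℐ''⊆ℐ'} 𝒮(ℐ''))^∁, the Markov chain Z_A ↔ Z_B ↔ Z_C holds, i.e. μ_{A∪B∪C}(z_A, z_B, z_C) · μ_B(z_B) = μ_{A∪B}(z_A, z_B) · μ_{B∪C}(z_B, z_C) for all z; (ii) μ factorizes according to the access structure, i.e. μ(z_𝒮) · ∏_{ℐ'∈𝔍} μ_{S̊(ℐ')}(z_{S̊(ℐ')}) = ∏_{ℐ'∈𝔍} μ_{𝒮(ℐ')∪S̊(ℐ')}(z_{𝒮(ℐ')∪S̊(ℐ')})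 for all z_𝒮. -/
attribute [local instance] Classical.propDecidable

open Finset

noncomputable section

/-- ℐ(s) = {i ∈ ℐ : (s,i) ∈ 𝒜}. -/
def IofF {S I : Type*} [Fintype I] (A : Finset (S × I)) (s : S) : Finset I :=
  Finset.univ.filter (fun i => (s, i) ∈ A)

/-- 𝒮(i) = {s ∈ 𝒮 : (s,i) ∈ 𝒜}. -/
def SofIdx {S I : Type*} [Fintype S] (A : Finset (S × I)) (i : I) : Finset S :=
  Finset.univ.filter (fun s => (s, i) ∈ A)

/-- 𝒮(ℐ') = {s ∈ 𝒮 : ℐ(s) = ℐ'}. -/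
def SofJ {S I : Type*} [Fintype S] [Fintype I] (A : Finset (S × I)) (J : Finset I) :
    Finset S :=
  Finset.univ.filter (fun s => IofF A s = J)

/-- 𝔍 = {ℐ' ⊆ ℐ : 𝒮(ℐ') ≠ ∅}. -/
def frak {S I : Type*} [Fintype S] [Fintype I] (A : Finset (S × I)) :
    Finset (Finset I) :=
  Finset.univ.filter (fun J => (SofJ A J).Nonempty)

/-- S̊(ℐ') = ⋃ of 𝒮(ℐ'') over ℐ'' ∈ 𝔍 with ℐ'' ⊋ ℐ'. -/
def Sring {S I : Type*} [Fintype S] [Fintype I] (A : Finset (S × I)) (J : Finset I) :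
    Finset S :=
  ((frak A).filter (fun J' => J ⊂ J')).biUnion (SofJ A)

/-- B = (⋂_{i∈ℐ'} 𝒮(i)) ∩ 𝒮(ℐ')^∁, the index set of the public sources. -/
def Bset {S I : Type*} [Fintype S] [Fintype I] [DecidableEq S] (A : Finset (S × I))
    (J : Finset I) : Finset S :=
  (J.inf (SofIdx A)) ∩ (SofJ A J)ᶜ

/-- A = (⋂_{i∈ℐ'} 𝒮(i))^∁ ∩ (⋃_{ℐ''∈𝔍 : ℐ''⊆ℐ'} 𝒮(ℐ''))^∁, the index set of the
irrelevant sources. -/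
def Aset {S I : Type*} [Fintype S] [Fintype I] [DecidableEq S] (A : Finset (S × I))
    (J : Finset I) : Finset S :=
  (J.inf (SofIdx A))ᶜ ∩ (((frak A).filter (fun J'' => J'' ⊆ J)).biUnion (SofJ A))ᶜ

/-- Marginal of the pmf μ on the coordinates of 𝒮' (as a function of the full tuple;
`marg μ ∅ z = 1` when μ is a pmf). -/
def marg {S : Type*} [Fintype S] {Z : S → Type*} [∀ s, Fintype (Z s)] [DecidableEq S]
    (μ : (∀ s, Z s) → ℝ) (S' : Finset S) (z : ∀ s, Z s) : ℝ :=
  ∑ w ∈ Finset.univ.filter (fun w : ∀ s, Z s => ∀ s ∈ S', w s = z s), μ w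

end

/-!
Write `T(𝒦) = {s : ℐ(s) ∈ 𝒦}` (`SofFamily A 𝒦`) for families `𝒦 ⊆ 𝔍` closed under passing
to larger members of `𝔍`. For `ℐ' ∈ 𝔍` one has `B = S̊(ℐ')`, `A ∪ B = T{ℐ'' : ℐ'' ⊈ ℐ'}` and
`A ∪ B ∪ C = T{ℐ'' : ℐ'' ⊄ ℐ'}`.

(i) ⇒ (ii): if `K` is minimal in `𝒦`, summing the Markov identity at `K` over the sources
in `T{ℐ'' : ℐ'' ⊄ K} ∖ T(𝒦)` gives `μ_{T(𝒦)} μ_{S̊(K)} = μ_{T(𝒦 ∖ {K})} μ_{𝒮(K) ∪ S̊(K)}`.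
By induction, `μ_{T(𝒦)} ∏_{K ∈ 𝒦} μ_{S̊(K)} = ∏_{K ∈ 𝒦} μ_{𝒮(K) ∪ S̊(K)}`, and `𝒦 = 𝔍`,
where `T(𝔍) = 𝒮`, is the factorization.

(ii) ⇒ (i): the factorization makes `μ` the product of the conditional pmfs `p_K` of
`Z_{𝒮(K)}` given `Z_{S̊(K)}`. Summing out the coordinates outside `T(𝒦)`, those of minimal
members of `𝔍 ∖ 𝒦` first, gives `μ_{T(𝒦)} = ∏_{K ∈ 𝒦} p_K`. Applied to `𝒦 = {ℐ'' : ℐ'' ⊈ ℐ'}`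
and to `𝒦 ∪ {ℐ'}`, together with `p_{ℐ'} μ_{S̊(ℐ')} = μ_{𝒮(ℐ') ∪ S̊(ℐ')}`, this is the Markov
chain at `ℐ'`.
-/

section Marginals

variable {S : Type*} [Fintype S] [DecidableEq S] {Z : S → Type*} [∀ s, Fintype (Z s)]

noncomputable def cylinder (E : Finset S) (z : ∀ s, Z s) : Finset (∀ s, Z s) :=
  univ.filter (fun w : ∀ s, Z s => ∀ s ∈ E, w s = z s)

@[simp]
lemma mem_cylinder {E : Finset S} {z w : ∀ s, Z s} : w ∈ cylinder E z ↔ ∀ s ∈ E, w s = z s := by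
  simp [cylinder]

lemma cylinder_empty (z : ∀ s, Z s) : cylinder (∅ : Finset S) z = univ := by
  ext w; simp

lemma cylinder_univ (z : ∀ s, Z s) : cylinder (univ : Finset S) z = {z} := by
  ext w; simp [funext_iff]

lemma sum_cylinder_cylinder {E E' : Finset S} (h : E ∪ E' = univ) (f : (∀ s, Z s) → ℝ)
    (z : ∀ s, Z s) :
    ∑ w ∈ cylinder E z, ∑ v ∈ cylinder E' w, f v = ∑ v ∈ cylinder (E ∩ E') z, f v := by
  have hE' : ∀ s, s ∉ E → s ∈ E' := fun s hs => by
    simpa [hs] using (Finset.ext_iff.1 h s).2 (mem_univ s)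
  -- `w` is recovered from `v` by resetting the coordinates in `E` to those of `z`.
  rw [Finset.sum_comm' (t' := cylinder (E ∩ E') z)
    (s' := fun v => {fun s => if s ∈ E then z s else v s})]
  · simp
  · intro w v
    simp only [mem_cylinder, mem_inter, mem_singleton, funext_iff]
    constructor
    · rintro ⟨hw, hv⟩
      refine ⟨fun s => ?_, fun s hs => (hv s hs.2).trans (hw s hs.1)⟩
      split_ifs with hsE
      · exact hw s hsE
      · exact (hv s (hE' s hsE)).symm
    · rintro ⟨hw, hv⟩
      refine ⟨fun s hs => by simp [hw s, hs], fun s hs => ?_⟩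
      by_cases hsE : s ∈ E
      · simp [hw s, hsE, hv s ⟨hsE, hs⟩]
      · simp [hw s, hsE]

lemma sum_cylinder_compl_union {D E : Finset S} (h : Disjoint D E) (f : (∀ s, Z s) → ℝ)
    (z : ∀ s, Z s) :
    ∑ w ∈ cylinder (D ∪ E)ᶜ z, f w = ∑ w ∈ cylinder Dᶜ z, ∑ v ∈ cylinder Eᶜ w, f v := by
  have hcover : Dᶜ ∪ Eᶜ = univ := by
    rw [← compl_inter, disjoint_iff_inter_eq_empty.1 h, compl_empty]
  rw [sum_cylinder_cylinder hcover, compl_union]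

variable {μ : (∀ s, Z s) → ℝ}

lemma marg_eq_sum_cylinder (μ : (∀ s, Z s) → ℝ) (E : Finset S) (z : ∀ s, Z s) :
    marg μ E z = ∑ w ∈ cylinder E z, μ w := rfl

lemma marg_nonneg (hμ0 : ∀ z, 0 ≤ μ z) (E : Finset S) (z : ∀ s, Z s) : 0 ≤ marg μ E z :=
  Finset.sum_nonneg fun w _ => hμ0 w

lemma marg_anti (hμ0 : ∀ z, 0 ≤ μ z) {E E' : Finset S} (h : E ⊆ E') (z : ∀ s, Z s) :
    marg μ E' z ≤ marg μ E z :=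
  Finset.sum_le_sum_of_subset_of_nonneg
    (fun _ hw => mem_cylinder.2 fun s hs => mem_cylinder.1 hw s (h hs)) fun w _ _ => hμ0 w

lemma marg_empty (hμ1 : ∑ z, μ z = 1) (z : ∀ s, Z s) : marg μ (∅ : Finset S) z = 1 := by
  rw [marg_eq_sum_cylinder, cylinder_empty, hμ1]

lemma marg_univ (μ : (∀ s, Z s) → ℝ) (z : ∀ s, Z s) : marg μ (univ : Finset S) z = μ z := by
  rw [marg_eq_sum_cylinder, cylinder_univ, sum_singleton]

lemma marg_congr {E : Finset S} {w z : ∀ s, Z s} (h : ∀ s ∈ E, w s = z s) :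
    marg μ E w = marg μ E z := by
  simp only [marg_eq_sum_cylinder, cylinder]
  congr 1
  ext v
  simp +contextual [h]

lemma marg_eq_of_mem_cylinder_compl {D E : Finset S} (hDE : Disjoint D E) {w z : ∀ s, Z s}
    (hw : w ∈ cylinder Dᶜ z) : marg μ E w = marg μ E z :=
  marg_congr fun s hs => mem_cylinder.1 hw s (mem_compl.2 (disjoint_right.1 hDE hs))

lemma sum_cylinder_compl_marg (μ : (∀ s, Z s) → ℝ) {D E : Finset S} (h : D ⊆ E)
    (z : ∀ s, Z s) : ∑ w ∈ cylinder Dᶜ z, marg μ E w = marg μ (E \ D) z := by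
  have hcover : Dᶜ ∪ E = univ := by
    ext s
    by_cases hs : s ∈ D
    · simp [h hs]
    · simp [hs]
  rw [sdiff_eq_inter_compl, inter_comm]
  exact sum_cylinder_cylinder hcover μ z

lemma marg_sdiff_mul_eq_of_mul_eq {X Y B C D : Finset S}
    (h : ∀ w, marg μ X w * marg μ B w = marg μ Y w * marg μ C w)
    (hX : D ⊆ X) (hY : D ⊆ Y) (hB : Disjoint D B) (hC : Disjoint D C) (z : ∀ s, Z s) :
    marg μ (X \ D) z * marg μ B z = marg μ (Y \ D) z * marg μ C z := by
  calc marg μ (X \ D) z * marg μ B z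
      = ∑ w ∈ cylinder Dᶜ z, marg μ X w * marg μ B w := by
        rw [← sum_cylinder_compl_marg μ hX, sum_mul]
        exact sum_congr rfl fun w hw => by rw [marg_eq_of_mem_cylinder_compl hB hw]
    _ = ∑ w ∈ cylinder Dᶜ z, marg μ Y w * marg μ C w := sum_congr rfl fun w _ => h w
    _ = marg μ (Y \ D) z * marg μ C z := by
        rw [← sum_cylinder_compl_marg μ hY, sum_mul]
        exact sum_congr rfl fun w hw => by rw [marg_eq_of_mem_cylinder_compl hC hw]

end Marginals

theorem Finset.induction_on_erase_minimal {α : Type*} [PartialOrder α] [DecidableEq α]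
    {p : Finset α → Prop} (s : Finset α) (empty : p ∅)
    (erase : ∀ s : Finset α, ∀ a ∈ s, (∀ b ∈ s, ¬ b < a) → p (s.erase a) → p s) : p s := by
  induction s using Finset.strongInduction with
  | H s ih =>
    rcases s.eq_empty_or_nonempty with rfl | hs
    · exact empty
    · obtain ⟨a, ha⟩ := s.exists_minimal hs
      exact erase s a ha.prop (fun b hb => ha.not_lt hb) (ih _ (s.erase_ssubset ha.prop))

section AccessStructure

variable {S I : Type*} [Fintype S] [Fintype I] {A : Finset (S × I)}

noncomputable def SofFamily (A : Finset (S × I)) (𝒦 : Finset (Finset I)) : Finset S :=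
  𝒦.biUnion (SofJ A)

lemma mem_SofJ {J : Finset I} {s : S} : s ∈ SofJ A J ↔ IofF A s = J := by
  simp [SofJ]

lemma IofF_mem_frak (A : Finset (S × I)) (s : S) : IofF A s ∈ frak A := by
  simpa [frak] using ⟨s, mem_SofJ.2 rfl⟩

lemma mem_SofFamily {𝒦 : Finset (Finset I)} {s : S} : s ∈ SofFamily A 𝒦 ↔ IofF A s ∈ 𝒦 := by
  simp [SofFamily, mem_SofJ]

lemma mem_Sring {J : Finset I} {s : S} : s ∈ Sring A J ↔ J ⊂ IofF A s := by
  simp only [Sring, mem_biUnion, mem_filter, mem_SofJ]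
  exact ⟨fun ⟨_, ⟨_, h⟩, hs⟩ => hs ▸ h, fun h => ⟨_, ⟨IofF_mem_frak A s, h⟩, rfl⟩⟩

lemma disjoint_SofJ_Sring (A : Finset (S × I)) (K : Finset I) :
    Disjoint (SofJ A K) (Sring A K) :=
  disjoint_left.2 fun _ hs hs' => (mem_Sring.1 hs').ne (mem_SofJ.1 hs).symm

lemma SofFamily_frak (A : Finset (S × I)) : SofFamily A (frak A) = univ := by
  ext s; simp [mem_SofFamily, IofF_mem_frak]

lemma SofFamily_subset_SofFamily {𝒦 ℒ : Finset (Finset I)} (h : 𝒦 ⊆ ℒ) :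
    SofFamily A 𝒦 ⊆ SofFamily A ℒ :=
  fun _ hs => mem_SofFamily.2 (h (mem_SofFamily.1 hs))

variable [DecidableEq S]

lemma SofFamily_sdiff (A : Finset (S × I)) (𝒦 ℒ : Finset (Finset I)) :
    SofFamily A 𝒦 \ SofFamily A ℒ = SofFamily A (𝒦 \ ℒ) := by
  ext s; simp [mem_SofFamily]

lemma mem_inf_SofIdx {K : Finset I} {s : S} : s ∈ K.inf (SofIdx A) ↔ K ⊆ IofF A s := by
  simp [SofIdx, IofF, mem_inf, Finset.subset_iff]

lemma Bset_eq_Sring (A : Finset (S × I)) (K : Finset I) : Bset A K = Sring A K := by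
  ext s
  simp only [Bset, mem_inter, mem_compl, mem_inf_SofIdx, mem_SofJ, mem_Sring,
    ssubset_iff_subset_ne, ne_comm]

lemma Aset_union_Bset (A : Finset (S × I)) (K : Finset I) :
    Aset A K ∪ Bset A K = SofFamily A ((frak A).filter (fun J => ¬ J ⊆ K)) := by
  ext s
  have hs := IofF_mem_frak A s
  simp only [Aset, Bset_eq_Sring, mem_union, mem_inter, mem_compl, mem_inf_SofIdx, mem_Sring,
    mem_biUnion, mem_filter, mem_SofJ, mem_SofFamily, ssubset_iff_subset_not_subset]
  grind

lemma Aset_union_Bset_union_SofJ (A : Finset (S × I)) (K : Finset I) :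
    Aset A K ∪ Bset A K ∪ SofJ A K = SofFamily A ((frak A).filter (fun J => ¬ J ⊂ K)) := by
  ext s
  rw [mem_union, Aset_union_Bset, mem_SofFamily, mem_SofFamily, mem_SofJ, mem_filter, mem_filter,
    ssubset_iff_subset_not_subset, Finset.Subset.antisymm_iff]
  have := IofF_mem_frak A s
  tauto

end AccessStructure

section UpClosed

variable {S I : Type*} [Fintype S] [Fintype I] {A : Finset (S × I)}

def IsUpClosed (A : Finset (S × I)) (𝒦 : Finset (Finset I)) : Prop :=
  𝒦 ⊆ frak A ∧ ∀ J ∈ 𝒦, ∀ J' ∈ frak A, J ⊂ J' → J' ∈ 𝒦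

lemma isUpClosed_frak (A : Finset (S × I)) : IsUpClosed A (frak A) :=
  ⟨subset_rfl, fun _ _ _ hJ' _ => hJ'⟩

lemma isUpClosed_frak_filter {p : Finset I → Prop} [DecidablePred p]
    (hp : ∀ J J', J ⊂ J' → p J → p J') :
    IsUpClosed A ((frak A).filter p) := by
  refine ⟨filter_subset _ _, fun J hJ J' hJ' hJJ' => ?_⟩
  rw [mem_filter] at hJ ⊢
  exact ⟨hJ', hp J J' hJJ' hJ.2⟩

lemma isUpClosed_filter_not_subset (A : Finset (S × I)) (K : Finset I) :
    IsUpClosed A ((frak A).filter fun J => ¬ J ⊆ K) :=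
  isUpClosed_frak_filter fun _ _ hJJ' h h' => h (hJJ'.subset.trans h')

lemma isUpClosed_filter_not_ssubset (A : Finset (S × I)) (K : Finset I) :
    IsUpClosed A ((frak A).filter fun J => ¬ J ⊂ K) :=
  isUpClosed_frak_filter fun _ _ hJJ' h h' => h (hJJ'.le.trans_lt h')

lemma filter_not_ssubset_eq_insert {K : Finset I} (hK : K ∈ frak A) :
    (frak A).filter (fun J => ¬ J ⊂ K) = insert K ((frak A).filter fun J => ¬ J ⊆ K) := by
  ext J
  simp only [mem_filter, mem_insert, ssubset_iff_subset_ne]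
  grind

lemma IsUpClosed.erase_of_minimal {𝒦 : Finset (Finset I)} (hU : IsUpClosed A 𝒦)
    {K : Finset I} (hmin : ∀ J ∈ 𝒦, ¬ J ⊂ K) : IsUpClosed A (𝒦.erase K) := by
  refine ⟨(erase_subset _ _).trans hU.1, fun J hJ J' hJ' hJJ' => ?_⟩
  rw [mem_erase] at hJ ⊢
  refine ⟨?_, hU.2 J hJ.2 J' hJ' hJJ'⟩
  rintro rfl
  exact hmin J hJ.2 hJJ'

lemma IsUpClosed.SofJ_union_Sring_subset [DecidableEq S] {𝒦 : Finset (Finset I)}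
    (hU : IsUpClosed A 𝒦) {J : Finset I} (hJ : J ∈ 𝒦) :
    SofJ A J ∪ Sring A J ⊆ SofFamily A 𝒦 := by
  intro s hs
  rw [mem_SofFamily]
  rcases mem_union.1 hs with hs | hs
  · exact mem_SofJ.1 hs ▸ hJ
  · exact hU.2 J hJ _ (IofF_mem_frak A s) (mem_Sring.1 hs)

end UpClosed

section MarkovToFactorization

variable {S I : Type*} [Fintype S] [Fintype I] [DecidableEq S] {A : Finset (S × I)}
  {Z : S → Type*} [∀ s, Fintype (Z s)] {μ : (∀ s, Z s) → ℝ}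

def IsMarkovAt (A : Finset (S × I)) (μ : (∀ s, Z s) → ℝ) (K : Finset I) : Prop :=
  ∀ z, marg μ (Aset A K ∪ Bset A K ∪ SofJ A K) z * marg μ (Bset A K) z
    = marg μ (Aset A K ∪ Bset A K) z * marg μ (Bset A K ∪ SofJ A K) z

lemma marg_SofFamily_mul_marg_Sring {K : Finset I} (hM : IsMarkovAt A μ K)
    {𝒦 : Finset (Finset I)} (hU : IsUpClosed A 𝒦) (hK : K ∈ 𝒦) (hmin : ∀ J ∈ 𝒦, ¬ J ⊂ K)
    (z : ∀ s, Z s) :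
    marg μ (SofFamily A 𝒦) z * marg μ (Sring A K) z
      = marg μ (SofFamily A (𝒦.erase K)) z * marg μ (SofJ A K ∪ Sring A K) z := by
  unfold IsMarkovAt at hM
  rw [Aset_union_Bset_union_SofJ, Aset_union_Bset, Bset_eq_Sring,
    union_comm (Sring A K)] at hM
  set 𝒦₁ := (frak A).filter (fun J => ¬ J ⊆ K)
  set 𝒦₂ := (frak A).filter (fun J => ¬ J ⊂ K)
  have h𝒦₂ : 𝒦 ⊆ 𝒦₂ := fun J hJ => mem_filter.2 ⟨hU.1 hJ, hmin J hJ⟩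
  have h𝒦₁ : 𝒦₂ \ 𝒦 ⊆ 𝒦₁ := by
    intro J hJ
    simp only [𝒦₁, 𝒦₂, mem_sdiff, mem_filter] at hJ ⊢
    refine ⟨hJ.1.1, fun hJK => hJ.1.2 (ssubset_of_subset_of_ne hJK ?_)⟩
    rintro rfl
    exact hJ.2 hK
  have h𝒦₁_sdiff : 𝒦₁ \ (𝒦₂ \ 𝒦) = 𝒦.erase K := by
    ext J
    have hJ := @hU.1 J
    have hJK := hmin J
    simp only [𝒦₁, 𝒦₂, mem_sdiff, mem_filter, mem_erase, ssubset_iff_subset_ne]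
    grind
  have hdisj : Disjoint (SofFamily A (𝒦₂ \ 𝒦)) (SofFamily A 𝒦) := by
    rw [← SofFamily_sdiff]
    exact disjoint_sdiff_self_left
  have hCB := hU.SofJ_union_Sring_subset hK
  have h := marg_sdiff_mul_eq_of_mul_eq hM (SofFamily_subset_SofFamily sdiff_subset)
    (SofFamily_subset_SofFamily h𝒦₁) (hdisj.mono_right (subset_union_right.trans hCB))
    (hdisj.mono_right hCB) z
  rwa [SofFamily_sdiff, SofFamily_sdiff, Finset.sdiff_sdiff_eq_self h𝒦₂, h𝒦₁_sdiff] at h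

lemma marg_SofFamily_mul_prod_of_markov (hμ1 : ∑ z, μ z = 1)
    (hM : ∀ J ∈ frak A, IsMarkovAt A μ J) {𝒦 : Finset (Finset I)} (hU : IsUpClosed A 𝒦)
    (z : ∀ s, Z s) :
    marg μ (SofFamily A 𝒦) z * ∏ J ∈ 𝒦, marg μ (Sring A J) z
      = ∏ J ∈ 𝒦, marg μ (SofJ A J ∪ Sring A J) z := by
  induction 𝒦 using Finset.induction_on_erase_minimal with
  | empty => simp [SofFamily, marg_empty hμ1]
  | erase 𝒦 K hK hmin ih =>
    rw [← mul_prod_erase _ _ hK, ← mul_prod_erase _ _ hK, ← ih (hU.erase_of_minimal hmin)]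
    linear_combination (∏ J ∈ 𝒦.erase K, marg μ (Sring A J) z) *
      marg_SofFamily_mul_marg_Sring (hM K (hU.1 hK)) hU hK hmin z

end MarkovToFactorization

section FactorizationToMarkov

variable {S I : Type*} [Fintype S] [Fintype I] [DecidableEq S] {A : Finset (S × I)}
  {Z : S → Type*} [∀ s, Fintype (Z s)] {μ : (∀ s, Z s) → ℝ}

/-- Where `μ_{S̊(K)}` vanishes, the marginal on `𝒮(K)` stands in for the conditional pmf, so
that `condMarg A μ K` still sums to one over the coordinates in `𝒮(K)`. -/
noncomputable def condMarg (A : Finset (S × I)) (μ : (∀ s, Z s) → ℝ) (K : Finset I)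
    (z : ∀ s, Z s) : ℝ :=
  if marg μ (Sring A K) z = 0 then marg μ (SofJ A K) z
  else marg μ (SofJ A K ∪ Sring A K) z / marg μ (Sring A K) z

lemma condMarg_nonneg (hμ0 : ∀ z, 0 ≤ μ z) (K : Finset I) (z : ∀ s, Z s) :
    0 ≤ condMarg A μ K z := by
  unfold condMarg
  split_ifs
  · exact marg_nonneg hμ0 _ _
  · exact div_nonneg (marg_nonneg hμ0 _ _) (marg_nonneg hμ0 _ _)

lemma condMarg_congr {K : Finset I} {w z : ∀ s, Z s}
    (h : ∀ s ∈ SofJ A K ∪ Sring A K, w s = z s) : condMarg A μ K w = condMarg A μ K z := by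
  unfold condMarg
  rw [marg_congr h, marg_congr (E := SofJ A K) fun s hs => h s (mem_union_left _ hs),
    marg_congr (E := Sring A K) fun s hs => h s (mem_union_right _ hs)]

lemma condMarg_eq_of_mem_cylinder_compl {D : Finset S} {K : Finset I}
    (hD : Disjoint D (SofJ A K ∪ Sring A K)) {w z : ∀ s, Z s} (hw : w ∈ cylinder Dᶜ z) :
    condMarg A μ K w = condMarg A μ K z :=
  condMarg_congr fun s hs => mem_cylinder.1 hw s (mem_compl.2 (disjoint_right.1 hD hs))

lemma condMarg_mul_marg_Sring (hμ0 : ∀ z, 0 ≤ μ z) (K : Finset I) (z : ∀ s, Z s) :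
    condMarg A μ K z * marg μ (Sring A K) z = marg μ (SofJ A K ∪ Sring A K) z := by
  unfold condMarg
  split_ifs with h
  · have hle : marg μ (SofJ A K ∪ Sring A K) z ≤ marg μ (Sring A K) z :=
      marg_anti hμ0 subset_union_right z
    rw [h, mul_zero]
    linarith [marg_nonneg hμ0 (SofJ A K ∪ Sring A K) z]
  · exact div_mul_cancel₀ _ h

lemma sum_condMarg (hμ1 : ∑ z, μ z = 1) (K : Finset I) (z : ∀ s, Z s) :
    ∑ w ∈ cylinder (SofJ A K)ᶜ z, condMarg A μ K w = 1 := by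
  have hSring : ∀ w ∈ cylinder (SofJ A K)ᶜ z, marg μ (Sring A K) w = marg μ (Sring A K) z :=
    fun w hw => marg_eq_of_mem_cylinder_compl (disjoint_SofJ_Sring A K) hw
  by_cases h0 : marg μ (Sring A K) z = 0
  · have hval : ∀ w ∈ cylinder (SofJ A K)ᶜ z, condMarg A μ K w = marg μ (SofJ A K) w :=
      fun w hw => if_pos ((hSring w hw).trans h0)
    rw [sum_congr rfl hval, sum_cylinder_compl_marg μ subset_rfl, Finset.sdiff_self, marg_empty hμ1]
  · have hval : ∀ w ∈ cylinder (SofJ A K)ᶜ z,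
        condMarg A μ K w = marg μ (SofJ A K ∪ Sring A K) w / marg μ (Sring A K) z :=
      fun w hw => (if_neg ((hSring w hw).trans_ne h0)).trans (by rw [hSring w hw])
    rw [sum_congr rfl hval, ← sum_div, sum_cylinder_compl_marg μ subset_union_left,
      union_sdiff_cancel_left (disjoint_SofJ_Sring A K), div_self h0]

lemma sum_prod_condMarg (hμ1 : ∑ z, μ z = 1) (ℒ : Finset (Finset I)) (z : ∀ s, Z s) :
    ∑ w ∈ cylinder (SofFamily A ℒ)ᶜ z, ∏ J ∈ ℒ, condMarg A μ J w = 1 := by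
  induction ℒ using Finset.induction_on_erase_minimal generalizing z with
  | empty => simp [SofFamily, cylinder_univ]
  | erase ℒ K hK hmin ih =>
    have hsplit : SofFamily A ℒ = SofFamily A (ℒ.erase K) ∪ SofJ A K := by
      ext s
      simp only [mem_union, mem_SofFamily, mem_SofJ, mem_erase]
      grind
    have hdisj : Disjoint (SofFamily A (ℒ.erase K)) (SofJ A K) :=
      disjoint_left.2 fun s hs hs' => by
        simp [mem_SofFamily, mem_SofJ.1 hs'] at hs
    have hfree : ∀ J ∈ ℒ.erase K, Disjoint (SofJ A K) (SofJ A J ∪ Sring A J) := by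
      intro J hJ
      refine disjoint_left.2 fun s hsK hsJ => ?_
      rw [mem_union, mem_SofJ, mem_Sring, mem_SofJ.1 hsK] at hsJ
      rw [mem_erase] at hJ
      exact hsJ.elim (fun h => hJ.1 h.symm) (hmin J hJ.2)
    have hinner : ∀ w, ∑ v ∈ cylinder (SofJ A K)ᶜ w, ∏ J ∈ ℒ, condMarg A μ J v
        = ∏ J ∈ ℒ.erase K, condMarg A μ J w := fun w => by
      calc ∑ v ∈ cylinder (SofJ A K)ᶜ w, ∏ J ∈ ℒ, condMarg A μ J v
          = ∑ v ∈ cylinder (SofJ A K)ᶜ w, condMarg A μ K v * ∏ J ∈ ℒ.erase K, condMarg A μ J w :=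
            sum_congr rfl fun v hv => by
              rw [← mul_prod_erase _ _ hK, prod_congr rfl fun J hJ =>
                condMarg_eq_of_mem_cylinder_compl (hfree J hJ) hv]
        _ = ∏ J ∈ ℒ.erase K, condMarg A μ J w := by rw [← sum_mul, sum_condMarg hμ1, one_mul]
    rw [hsplit, sum_cylinder_compl_union hdisj, sum_congr rfl fun w _ => hinner w, ih]

def Factorizes (A : Finset (S × I)) (μ : (∀ s, Z s) → ℝ) : Prop :=
  ∀ z, μ z * ∏ J ∈ frak A, marg μ (Sring A J) z = ∏ J ∈ frak A, marg μ (SofJ A J ∪ Sring A J) z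

/-- Under the factorization, `μ` is dominated pointwise by the product of the conditional
pmfs; both have total mass one, so they agree. -/
lemma eq_prod_condMarg (hμ0 : ∀ z, 0 ≤ μ z) (hμ1 : ∑ z, μ z = 1) (hF : Factorizes A μ)
    (z : ∀ s, Z s) : μ z = ∏ J ∈ frak A, condMarg A μ J z := by
  have hle : ∀ w, μ w ≤ ∏ J ∈ frak A, condMarg A μ J w := by
    intro w
    by_cases hw : ∀ J ∈ frak A, marg μ (Sring A J) w ≠ 0
    · refine le_of_eq (mul_right_cancel₀ (prod_ne_zero_iff.2 hw) ?_)
      rw [hF w, ← prod_mul_distrib]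
      exact prod_congr rfl fun J _ => (condMarg_mul_marg_Sring hμ0 J w).symm
    · obtain ⟨J, -, hJ⟩ : ∃ J ∈ frak A, marg μ (Sring A J) w = 0 := by simpa using hw
      calc μ w = marg μ univ w := (marg_univ μ w).symm
        _ ≤ marg μ (Sring A J) w := marg_anti hμ0 (subset_univ _) w
        _ = 0 := hJ
        _ ≤ _ := prod_nonneg fun J _ => condMarg_nonneg hμ0 J w
  have hsum : ∑ w, ∏ J ∈ frak A, condMarg A μ J w = 1 := by
    have h := sum_prod_condMarg (A := A) hμ1 (frak A) z
    rwa [SofFamily_frak, compl_univ, cylinder_empty] at h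
  exact (sum_eq_sum_iff_of_le fun w _ => hle w).1 (hμ1.trans hsum.symm) z (mem_univ z)

lemma marg_SofFamily_eq_prod_condMarg (hμ0 : ∀ z, 0 ≤ μ z) (hμ1 : ∑ z, μ z = 1)
    (hF : Factorizes A μ) {𝒦 : Finset (Finset I)} (hU : IsUpClosed A 𝒦) (z : ∀ s, Z s) :
    marg μ (SofFamily A 𝒦) z = ∏ J ∈ 𝒦, condMarg A μ J z := by
  have hcompl : SofFamily A 𝒦 = (SofFamily A (frak A \ 𝒦))ᶜ := by
    rw [← SofFamily_sdiff, SofFamily_frak, ← compl_eq_univ_sdiff, compl_compl]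
  have hdisj : Disjoint (SofFamily A (frak A \ 𝒦)) (SofFamily A 𝒦) := by
    rw [← SofFamily_sdiff]
    exact disjoint_sdiff_self_left
  have hfactor : ∀ w ∈ cylinder (SofFamily A 𝒦) z, μ w
      = (∏ J ∈ frak A \ 𝒦, condMarg A μ J w) * ∏ J ∈ 𝒦, condMarg A μ J z := by
    intro w hw
    rw [hcompl] at hw
    rw [eq_prod_condMarg hμ0 hμ1 hF w, ← prod_sdiff hU.1]
    exact congrArg _ (prod_congr rfl fun J hJ => condMarg_eq_of_mem_cylinder_compl
      (hdisj.mono_right (hU.SofJ_union_Sring_subset hJ)) hw)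
  rw [marg_eq_sum_cylinder, sum_congr rfl hfactor, ← sum_mul, hcompl, sum_prod_condMarg hμ1,
    one_mul]

end FactorizationToMarkov

theorem stmt8_general {S I : Type*} [Fintype S] [Fintype I] [DecidableEq S]
    {Z : S → Type*} [∀ s, Fintype (Z s)]
    (A : Finset (S × I)) (μ : (∀ s, Z s) → ℝ)
    (hμ0 : ∀ z, 0 ≤ μ z) (hμ1 : ∑ z, μ z = 1) :
    (∀ J ∈ frak A, ∀ z : ∀ s, Z s,
        marg μ (Aset A J ∪ Bset A J ∪ SofJ A J) z * marg μ (Bset A J) z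
          = marg μ (Aset A J ∪ Bset A J) z * marg μ (Bset A J ∪ SofJ A J) z)
      ↔ (∀ z : ∀ s, Z s,
        μ z * ∏ J ∈ frak A, marg μ (Sring A J) z
          = ∏ J ∈ frak A, marg μ (SofJ A J ∪ Sring A J) z) := by
  constructor
  · intro hM z
    simpa [SofFamily_frak, marg_univ] using
      marg_SofFamily_mul_prod_of_markov hμ1 hM (isUpClosed_frak A) z
  · intro hF K hK z
    have hU₂ := isUpClosed_filter_not_ssubset A K
    rw [filter_not_ssubset_eq_insert hK] at hU₂
    rw [Aset_union_Bset_union_SofJ, Aset_union_Bset, Bset_eq_Sring, filter_not_ssubset_eq_insert hK,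
      marg_SofFamily_eq_prod_condMarg hμ0 hμ1 hF (isUpClosed_filter_not_subset A K),
      marg_SofFamily_eq_prod_condMarg hμ0 hμ1 hF hU₂, prod_insert (by simp),
      union_comm, ← condMarg_mul_marg_Sring hμ0]
    ring

/-- Lemma 8 of the paper: the joint pmf μ of Z_𝒮 satisfies the Markov chains
Z_A ↔ Z_B ↔ Z_C for every ℐ' ∈ 𝔍 if and only if μ factorizes according to the
access structure. -/
theorem stmt8 {S I : Type*} [Fintype S] [Fintype I] [DecidableEq S] [DecidableEq I]
    {Z : S → Type*} [∀ s, Fintype (Z s)]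
    (A : Finset (S × I)) (μ : (∀ s, Z s) → ℝ)
    (hμ0 : ∀ z, 0 ≤ μ z) (hμ1 : ∑ z, μ z = 1) :
    (∀ J ∈ frak A, ∀ z : ∀ s, Z s,
        marg μ (Aset A J ∪ Bset A J ∪ SofJ A J) z * marg μ (Bset A J) z
          = marg μ (Aset A J ∪ Bset A J) z * marg μ (Bset A J ∪ SofJ A J) z)
      ↔ (∀ z : ∀ s, Z s,
        μ z * ∏ J ∈ frak A, marg μ (Sring A J) z
          = ∏ J ∈ frak A, marg μ (SofJ A J ∪ Sring A J) z) :=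
  stmt8_general A μ hμ0 hμ1
end

section
/- Let {(U_n, V_n)} be a sequence of pairs of random variables with joint distributions on countable alphabets 𝒰_n × 𝒱_n. Suppose there is a sequence {Ψ_n} of possibly stochastic functions Ψ_n : 𝒱_n → 𝒰_n (i.e. random maps), each independent of (U_n, V_n), such that lim_{n→∞} P(Ψ_n(V_n) ≠ U_n) = 0. Then the spectral conditional sup-entropy rate satisfies H̄(U|V) = 0. -/
attribute [local instance] Classical.propDecidable

open Filter

noncomputable section

/-- Probability of the event `E` under the joint pmf `μ n` of (U_n, V_n). -/
def Pr11 {U V : ℕ → Type*} (μ : ∀ n, U n × V n → ℝ) (n : ℕ) (E : Set (U n × V n)) : ℝ :=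
  ∑' x, if x ∈ E then μ n x else 0

/-- Marginal pmf of V_n. -/
def margV11 {U V : ℕ → Type*} (μ : ∀ n, U n × V n → ℝ) (n : ℕ) (v : V n) : ℝ :=
  ∑' u : U n, μ n (u, v)

/-- Spectral conditional sup-entropy rate H̄(U|V):
p-limsup (1/n) log₂ 1/μ_{U_n|V_n}(U_n|V_n), where
p-limsup A_n = inf {θ : lim P(A_n > θ) = 0}. -/
def Hbar11 {U V : ℕ → Type*} (μ : ∀ n, U n × V n → ℝ) : ℝ :=
  sInf {θ : ℝ | Tendsto (fun n => Pr11 μ n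
    {x | θ < (1 / (n : ℝ)) * Real.logb 2 (1 / (μ n x / margV11 μ n x.2))})
    atTop (nhds 0)}

/-- Error probability P(Ψ_n(V_n) ≠ U_n), where Ψ_n is a stochastic function with
distribution `ν n` on the set of functions 𝒱_n → 𝒰_n, independent of (U_n, V_n). -/
def errProb11 {U V : ℕ → Type*} (μ : ∀ n, U n × V n → ℝ)
    (ν : ∀ n, (V n → U n) → ℝ) (n : ℕ) : ℝ :=
  ∑' (x : U n × V n) (ψ : V n → U n), if ψ x.2 ≠ x.1 then μ n x * ν n ψ else 0

end

/-!
For `θ > 0`, every outcome `(u, v)` on which the normalized conditional information density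
exceeds `θ` has `μ(u, v) ≤ 2^{-θn} μ(v)`. A deterministic decoder `ψ` is correct only on its
graph `{(ψ v, v)}`, which carries at most `2^{-θn} ∑_v μ(v) = 2^{-θn}` of such mass; hence
`P(density > θ) ≤ P(ψ(V) ≠ U) + 2^{-θn}`, and averaging over the law of `Ψ_n` gives the same
bound with the error probability of `Ψ_n`, which tends to `0`. The density is nonnegative, so
`H̄(U|V)` is exactly `0`.
-/

open Set Topology

theorem csInf_eq_of_Ioi_subset_of_subset_Ici {α : Type*} [ConditionallyCompleteLinearOrder α]
    [NoMaxOrder α] [DenselyOrdered α] {S : Set α} {a : α} (hIoi : Ioi a ⊆ S)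
    (hIci : S ⊆ Ici a) :
    sInf S = a :=
  le_antisymm ((csInf_le_csInf ⟨a, hIci⟩ nonempty_Ioi hIoi).trans csInf_Ioi.le)
    (le_csInf (nonempty_Ioi.mono hIoi) hIci)

theorem le_tsum_mul_of_forall_le {ι : Type*} {q f : ι → ℝ} (hq0 : ∀ i, 0 ≤ q i)
    (hq1 : HasSum q 1) (hqf : Summable fun i => q i * f i) {a : ℝ} (h : ∀ i, a ≤ f i) :
    a ≤ ∑' i, q i * f i := by
  calc a = ∑' i, q i * a := by rw [tsum_mul_right, hq1.tsum_eq, one_mul]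
    _ ≤ ∑' i, q i * f i :=
      (hq1.summable.mul_right a).tsum_le_tsum (fun i => mul_le_mul_of_nonneg_left (h i) (hq0 i)) hqf

namespace Real

theorem logb_one_div_div_nonneg {b x y : ℝ} (hb : 1 < b) (hx : 0 ≤ x) (hxy : x ≤ y) :
    0 ≤ logb b (1 / (x / y)) := by
  rw [one_div, logb_inv, neg_nonneg]
  exact logb_nonpos hb (div_nonneg hx (hx.trans hxy)) (div_le_one_of_le₀ hxy (hx.trans hxy))

theorem le_rpow_neg_mul_of_lt_logb_one_div_div {b t x y : ℝ} (hb : 1 < b) (hx : 0 ≤ x)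
    (hxy : x ≤ y) (h : t < logb b (1 / (x / y))) : x ≤ b ^ (-t) * y := by
  rcases hx.eq_or_lt with rfl | hx
  · exact mul_nonneg (rpow_nonneg (by linarith) _) (hx.trans hxy)
  have hy : 0 < y := hx.trans_le hxy
  rw [one_div, logb_inv, lt_neg] at h
  rw [← div_le_iff₀ hy]
  exact ((logb_lt_iff_lt_rpow hb (div_pos hx hy)).mp h).le

end Real

section SingleIndex

variable {X Y : Type*} {p : X × Y → ℝ}

theorem summable_fiber_snd (hp : Summable p) (v : Y) : Summable fun u => p (u, v) :=
  hp.prod_symm.prod_factor v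

theorem le_tsum_fiber_snd (hp0 : ∀ x, 0 ≤ p x) (hp : Summable p) (x : X × Y) :
    p x ≤ ∑' u, p (u, x.2) :=
  (summable_fiber_snd hp x.2).le_tsum x.1 fun _ _ => hp0 _

theorem hasSum_tsum_fiber_snd {a : ℝ} (hp : HasSum p a) :
    HasSum (fun v => ∑' u, p (u, v)) a :=
  ((Equiv.prodComm Y X).hasSum_iff.mpr hp).prod_fiberwise
    fun v => (summable_fiber_snd hp.summable v).hasSum

theorem hasSum_ite_graph (ψ : Y → X) {g : Y → ℝ} {a : ℝ} (hg : HasSum g a) :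
    HasSum (fun x : X × Y => if ψ x.2 = x.1 then g x.2 else 0) a := by
  refine (Function.Injective.hasSum_iff (g := fun v => (ψ v, v))
    (fun _ _ h => congrArg Prod.snd h) ?_).mp (by simpa [Function.comp_def] using hg)
  rintro ⟨u, v⟩ hx
  exact if_neg fun h => hx ⟨v, Prod.ext h rfl⟩

theorem summable_ite_of_nonneg (hp0 : ∀ x, 0 ≤ p x) (hp : Summable p)
    (P : X × Y → Prop) [DecidablePred P] : Summable fun x => if P x then p x else 0 :=
  hp.of_nonneg_of_le (fun x => by split_ifs <;> simp [hp0])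
    (fun x => by split_ifs <;> simp [hp0])

theorem tsum_ite_mem_le_tsum_ite_ne_add (hp0 : ∀ x, 0 ≤ p x) (hp1 : HasSum p 1)
    {c : ℝ} (hc : 0 ≤ c) {A : Set (X × Y)} (hA : ∀ x ∈ A, p x ≤ c * ∑' u, p (u, x.2))
    (ψ : Y → X) :
    (∑' x, if x ∈ A then p x else 0) ≤ (∑' x, if ψ x.2 ≠ x.1 then p x else 0) + c := by
  have hgraph :
      HasSum (fun x : X × Y => if ψ x.2 = x.1 then c * ∑' u, p (u, x.2) else 0) c := by
    simpa using hasSum_ite_graph ψ ((hasSum_tsum_fiber_snd hp1).mul_left c)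
  have hsplit := (summable_ite_of_nonneg hp0 hp1.summable fun x => ψ x.2 ≠ x.1).hasSum.add hgraph
  refine (summable_ite_of_nonneg hp0 hp1.summable (· ∈ A)).tsum_le_tsum (fun x => ?_)
    hsplit.summable |>.trans_eq hsplit.tsum_eq
  have hfib := le_tsum_fiber_snd hp0 hp1.summable x
  by_cases hψ : ψ x.2 = x.1 <;> by_cases hx : x ∈ A <;>
    simp [hψ, hx, hA, hp0, mul_nonneg hc ((hp0 x).trans hfib)]

theorem tsum_ite_mem_le_errProb_add (hp0 : ∀ x, 0 ≤ p x) (hp1 : HasSum p 1)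
    {q : (Y → X) → ℝ} (hq0 : ∀ ψ, 0 ≤ q ψ) (hq1 : HasSum q 1)
    {c : ℝ} (hc : 0 ≤ c) {A : Set (X × Y)} (hA : ∀ x ∈ A, p x ≤ c * ∑' u, p (u, x.2)) :
    (∑' x, if x ∈ A then p x else 0)
      ≤ (∑' (x : X × Y) (ψ : Y → X), if ψ x.2 ≠ x.1 then p x * q ψ else 0) + c := by
  set err : (Y → X) → ℝ := fun ψ => ∑' x, if ψ x.2 ≠ x.1 then p x else 0
  have herr_le : ∀ ψ, err ψ ≤ 1 := fun ψ =>
    (summable_ite_of_nonneg hp0 hp1.summable _).tsum_le_tsum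
      (fun x => by split_ifs <;> simp [hp0]) hp1.summable |>.trans_eq hp1.tsum_eq
  have hjoint : Summable (Function.uncurry fun (x : X × Y) (ψ : Y → X) =>
      if ψ x.2 ≠ x.1 then p x * q ψ else 0) :=
    (hp1.summable.mul_of_nonneg hq1.summable hp0 hq0).of_nonneg_of_le
      (fun z => by dsimp only [Function.uncurry]; split_ifs <;> simp [mul_nonneg, hp0, hq0])
      (fun z => by dsimp only [Function.uncurry]; split_ifs <;> simp [mul_nonneg, hp0, hq0])
  have hswap : (∑' (x : X × Y) (ψ : Y → X), if ψ x.2 ≠ x.1 then p x * q ψ else 0)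
      = ∑' ψ, q ψ * err ψ := by
    rw [← Summable.tsum_comm hjoint]
    refine tsum_congr fun ψ => ?_
    rw [← tsum_mul_left]
    exact tsum_congr fun x => by split_ifs <;> ring
  rw [hswap, ← sub_le_iff_le_add]
  refine le_tsum_mul_of_forall_le hq0 hq1 ?_ fun ψ => sub_le_iff_le_add.mpr
    (tsum_ite_mem_le_tsum_ite_ne_add hp0 hp1 hc hA ψ)
  exact hq1.summable.of_nonneg_of_le
    (fun ψ => mul_nonneg (hq0 ψ) (tsum_nonneg fun x => by split_ifs <;> simp [hp0]))
    (fun ψ => mul_le_of_le_one_right (hq0 ψ) (herr_le ψ))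

end SingleIndex

section Spectral

variable {U V : ℕ → Type*}

noncomputable def condInfoDensity11 (μ : ∀ n, U n × V n → ℝ) (n : ℕ) (x : U n × V n) :
    ℝ :=
  (1 / (n : ℝ)) * Real.logb 2 (1 / (μ n x / margV11 μ n x.2))

variable {μ : ∀ n, U n × V n → ℝ}

theorem condInfoDensity11_nonneg (hμ0 : ∀ n x, 0 ≤ μ n x) (hμ : ∀ n, Summable (μ n))
    (n : ℕ) (x : U n × V n) : 0 ≤ condInfoDensity11 μ n x :=
  mul_nonneg (by positivity) (Real.logb_one_div_div_nonneg one_lt_two (hμ0 n x)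
    (le_tsum_fiber_snd (hμ0 n) (hμ n) x))

theorem le_mul_margV11_of_lt_condInfoDensity11 (hμ0 : ∀ n x, 0 ≤ μ n x)
    (hμ : ∀ n, Summable (μ n)) {θ : ℝ} (hθ : 0 < θ) {n : ℕ} {x : U n × V n}
    (hx : θ < condInfoDensity11 μ n x) :
    μ n x ≤ ((2 : ℝ) ^ (-θ)) ^ n * margV11 μ n x.2 := by
  have hn : (0 : ℝ) < n := by
    rcases (n.cast_nonneg : (0 : ℝ) ≤ n).eq_or_lt with hn | hn
    · simp [condInfoDensity11, ← hn] at hx; linarith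
    · exact hn
  rw [condInfoDensity11, one_div_mul_eq_div, lt_div_iff₀ hn] at hx
  rw [← Real.rpow_natCast, ← Real.rpow_mul zero_le_two, neg_mul]
  exact Real.le_rpow_neg_mul_of_lt_logb_one_div_div one_lt_two (hμ0 n x)
    (le_tsum_fiber_snd (hμ0 n) (hμ n) x) hx

theorem Pr11_nonneg (hμ0 : ∀ n x, 0 ≤ μ n x) (n : ℕ) (E : Set (U n × V n)) :
    0 ≤ Pr11 μ n E :=
  tsum_nonneg fun x => by split_ifs <;> simp [hμ0]

theorem Pr11_univ (hμ1 : ∀ n, HasSum (μ n) 1) (n : ℕ) : Pr11 μ n univ = 1 := by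
  simp [Pr11, (hμ1 n).tsum_eq]

end Spectral

theorem stmt11_general {U V : ℕ → Type*}
    (μ : ∀ n, U n × V n → ℝ)
    (hμ0 : ∀ n x, 0 ≤ μ n x) (hμ1 : ∀ n, HasSum (μ n) 1)
    (ν : ∀ n, (V n → U n) → ℝ)
    (hν0 : ∀ n ψ, 0 ≤ ν n ψ) (hν1 : ∀ n, HasSum (ν n) 1)
    (herr : Tendsto (errProb11 μ ν) atTop (nhds 0)) :
    Hbar11 μ = 0 := by
  have hμ : ∀ n, Summable (μ n) := fun n => (hμ1 n).summable
  refine csInf_eq_of_Ioi_subset_of_subset_Ici (fun θ (hθ : 0 < θ) => ?_) fun θ hθ => ?_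
  · have hr : (2 : ℝ) ^ (-θ) < 1 :=
      Real.rpow_lt_one_of_one_lt_of_neg one_lt_two (neg_neg_of_pos hθ)
    have hbound : ∀ n, Pr11 μ n {x | θ < condInfoDensity11 μ n x}
        ≤ errProb11 μ ν n + (2 ^ (-θ)) ^ n := fun n =>
      tsum_ite_mem_le_errProb_add (hμ0 n) (hμ1 n) (hν0 n) (hν1 n) (by positivity)
        fun x hx => le_mul_margV11_of_lt_condInfoDensity11 hμ0 hμ hθ hx
    refine squeeze_zero (fun n => Pr11_nonneg hμ0 n _) hbound ?_
    simpa using herr.add (tendsto_pow_atTop_nhds_zero_of_lt_one (by positivity) hr)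
  · refine mem_Ici.mpr (le_of_not_gt fun hneg => ?_)
    have hall : ∀ n, {x | θ < condInfoDensity11 μ n x} = univ := fun n =>
      eq_univ_of_forall fun x => hneg.trans_le (condInfoDensity11_nonneg hμ0 hμ n x)
    have h : Tendsto (fun n => Pr11 μ n {x | θ < condInfoDensity11 μ n x}) atTop (𝓝 0) := hθ
    simp only [hall, Pr11_univ hμ1, tendsto_const_nhds_iff] at h
    exact one_ne_zero h

/-- Fano-type lemma: if there are stochastic functions Ψ_n, independent of
(U_n, V_n), with P(Ψ_n(V_n) ≠ U_n) → 0, then H̄(U|V) = 0. -/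
theorem stmt11 {U V : ℕ → Type*} [∀ n, Countable (U n)] [∀ n, Countable (V n)]
    (μ : ∀ n, U n × V n → ℝ)
    (hμ0 : ∀ n x, 0 ≤ μ n x) (hμ1 : ∀ n, HasSum (μ n) 1)
    (ν : ∀ n, (V n → U n) → ℝ)
    (hν0 : ∀ n ψ, 0 ≤ ν n ψ) (hν1 : ∀ n, HasSum (ν n) 1)
    (herr : Tendsto (errProb11 μ ν) atTop (nhds 0)) :
    Hbar11 μ = 0 :=
  stmt11_general μ hμ0 hμ1 ν hν0 hν1 herr
end

section
/- Let (ℱ, p_F) and (𝒢, p_G) be ensembles of functions on the same finite set 𝒵, and suppose (ℱ, p_F) has the (α_F, β_F)-hash property and (𝒢, p_G) has the (α_G, β_G)-hash property. Define the joint ensemble (ℱ×𝒢, p_{(F,G)}) by (f,g)(z) := (f(z), g(z)) for z ∈ 𝒵 and p_{(F,G)}(f,g) := p_F(f)·p_G(g). Then (ℱ×𝒢, p_{(F,G)}) has the (α_F·α_G, β_F + β_G)-hash property. -/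
attribute [local instance] Classical.propDecidable

noncomputable section

/-- The image Im ℱ = ⋃_{f∈ℱ} f(𝒵) of an ensemble of functions 𝒵 → A, indexed by ι. -/
def ImF {ι Z A : Type*} [Fintype ι] [Fintype Z] (fn : ι → Z → A) : Finset A :=
  Finset.univ.image (fun p : ι × Z => fn p.1 p.2)

/-- The collision probability p_F({f : f(z) = f(z')}). -/
def pColl {ι Z A : Type*} [Fintype ι] (p : ι → ℝ) (fn : ι → Z → A) (z z' : Z) : ℝ :=
  ∑ i : ι, if fn i z = fn i z' then p i else 0

/-- The (α, β)-hash property: for every z,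
∑_{z' ≠ z : p_F({f : f z = f z'}) > α/|Im ℱ|} p_F({f : f z = f z'}) ≤ β. -/
def HashProp {ι Z A : Type*} [Fintype ι] [Fintype Z] (p : ι → ℝ) (fn : ι → Z → A)
    (α β : ℝ) : Prop :=
  ∀ z : Z,
    ∑ z' ∈ Finset.univ.filter
        (fun z' : Z => z' ≠ z ∧ α / ((ImF fn).card : ℝ) < pColl p fn z z'),
      pColl p fn z z' ≤ β

end


lemma pColl_nonneg {ι Z A : Type*} [Fintype ι] (p : ι → ℝ) (fn : ι → Z → A)
    (hp : ∀ i, 0 ≤ p i) (z z' : Z) : 0 ≤ pColl p fn z z' := by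
  apply Finset.sum_nonneg
  intro i _
  split <;> simp [hp i]

lemma pColl_le_one {ι Z A : Type*} [Fintype ι] (p : ι → ℝ) (fn : ι → Z → A)
    (hp : ∀ i, 0 ≤ p i) (hp1 : ∑ i, p i = 1) (z z' : Z) : pColl p fn z z' ≤ 1 := by
  rw [← hp1]
  apply Finset.sum_le_sum
  intro i _
  split <;> simp [hp i]

lemma pColl_prod {ι κ Z A B : Type*} [Fintype ι] [Fintype κ]
    (pF : ι → ℝ) (fnF : ι → Z → A) (pG : κ → ℝ) (fnG : κ → Z → B) (z z' : Z) :
    pColl (fun ij : ι × κ => pF ij.1 * pG ij.2)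
      (fun ij z => (fnF ij.1 z, fnG ij.2 z)) z z'
      = pColl pF fnF z z' * pColl pG fnG z z' := by
  classical
  unfold pColl
  rw [Finset.sum_mul_sum, Fintype.sum_prod_type]
  apply Finset.sum_congr rfl
  intro i _
  apply Finset.sum_congr rfl
  intro j _
  by_cases h1 : fnF i z = fnF i z' <;> by_cases h2 : fnG j z = fnG j z' <;>
    simp [h1, h2, Prod.ext_iff]

lemma ImF_card_le {ι κ Z A B : Type*} [Fintype ι] [Fintype κ] [Fintype Z]
    (fnF : ι → Z → A) (fnG : κ → Z → B) :
    (ImF (fun ij : ι × κ => fun z => (fnF ij.1 z, fnG ij.2 z))).card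
      ≤ (ImF fnF).card * (ImF fnG).card := by
  classical
  rw [← Finset.card_product]
  apply Finset.card_le_card
  intro x hx
  simp only [ImF, Finset.mem_image, Finset.mem_product, Finset.mem_univ, true_and] at hx ⊢
  obtain ⟨p, hp⟩ := hx
  exact ⟨⟨(p.1.1, p.2), by rw [← hp]⟩, ⟨(p.1.2, p.2), by rw [← hp]⟩⟩

/-- Joint-ensemble hash lemma: if (ℱ, p_F) has the (α_F, β_F)-hash property and
(𝒢, p_G) has the (α_G, β_G)-hash property on the same finite set 𝒵, then the joint
ensemble (f,g)(z) := (f z, g z) with p_{(F,G)}(f,g) := p_F(f)·p_G(g) has the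
(α_F·α_G, β_F + β_G)-hash property. -/
theorem stmt12 {ι κ Z A B : Type*} [Fintype ι] [Fintype κ] [Fintype Z]
    (pF : ι → ℝ) (fnF : ι → Z → A) (αF βF : ℝ)
    (pG : κ → ℝ) (fnG : κ → Z → B) (αG βG : ℝ)
    (hpF0 : ∀ i, 0 ≤ pF i) (hpF1 : ∑ i, pF i = 1)
    (hpG0 : ∀ j, 0 ≤ pG j) (hpG1 : ∑ j, pG j = 1)
    (hF : HashProp pF fnF αF βF) (hG : HashProp pG fnG αG βG) :
    HashProp (fun ij : ι × κ => pF ij.1 * pG ij.2)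
      (fun ij z => (fnF ij.1 z, fnG ij.2 z)) (αF * αG) (βF + βG) := by
  intro z
  classical
  set fnJ : ι × κ → Z → A × B := fun ij z => (fnF ij.1 z, fnG ij.2 z) with hfnJ
  set pJ : ι × κ → ℝ := fun ij => pF ij.1 * pG ij.2 with hpJ
  have hpJ0 : ∀ ij, 0 ≤ pJ ij := fun ij => mul_nonneg (hpF0 _) (hpG0 _)
  have hprod : ∀ z' : Z, pColl pJ fnJ z z' = pColl pF fnF z z' * pColl pG fnG z z' :=
    fun z' => pColl_prod pF fnF pG fnG z z'
  set cF := ((ImF fnF).card : ℝ) with hcF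
  set cG := ((ImF fnG).card : ℝ) with hcG
  set cJ := ((ImF fnJ).card : ℝ) with hcJ
  set SF := Finset.univ.filter
    (fun z' : Z => z' ≠ z ∧ αF / cF < pColl pF fnF z z') with hSF
  set SG := Finset.univ.filter
    (fun z' : Z => z' ≠ z ∧ αG / cG < pColl pG fnG z z') with hSG
  set SJ := Finset.univ.filter
    (fun z' : Z => z' ≠ z ∧ αF * αG / cJ < pColl pJ fnJ z z') with hSJ
  have hcFG : cJ ≤ cF * cG := by
    rw [hcF, hcG, hcJ, ← Nat.cast_mul]
    exact_mod_cast ImF_card_le fnF fnG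
  have hsub : SJ ⊆ SF ∪ SG := by
    intro z' hz'
    rw [hSJ, Finset.mem_filter] at hz'
    obtain ⟨-, hne, hlt⟩ := hz'
    rw [hprod] at hlt
    rw [Finset.mem_union, hSF, hSG, Finset.mem_filter, Finset.mem_filter]
    refine Or.imp (fun h => ⟨Finset.mem_univ _, hne, h⟩)
      (fun h => ⟨Finset.mem_univ _, hne, h⟩) ?_
    by_contra hcon
    push_neg at hcon
    obtain ⟨h1, h2⟩ := hcon
    have h0F := pColl_nonneg pF fnF hpF0 z z'
    have h0G := pColl_nonneg pG fnG hpG0 z z'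
    have hmul : pColl pF fnF z z' * pColl pG fnG z z' ≤ (αF / cF) * (αG / cG) :=
      mul_le_mul h1 h2 h0G (le_trans h0F h1)
    rw [div_mul_div_comm] at hmul
    rcases eq_or_lt_of_le (show (0:ℝ) ≤ cJ from by rw [hcJ]; exact_mod_cast Nat.zero_le _)
      with h0 | h0
    · -- cJ = 0 : the joint index type must be empty, so the collision prob is 0
      have hcard0 : (ImF fnJ).card = 0 := by
        have h0' := h0.symm
        rw [hcJ] at h0'
        exact_mod_cast h0'
      rw [Finset.card_eq_zero] at hcard0
      have hemp : IsEmpty (ι × κ) := by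
        by_contra hne2
        rw [not_isEmpty_iff] at hne2
        obtain ⟨ij⟩ := hne2
        have hm : fnJ ij z ∈ ImF fnJ := by
          simp only [ImF, Finset.mem_image]
          exact ⟨(ij, z), Finset.mem_univ _, rfl⟩
        simp [hcard0] at hm
      have hz0 : pColl pJ fnJ z z' = 0 := by
        unfold pColl
        rw [Finset.univ_eq_empty, Finset.sum_empty]
      rw [hprod] at hz0
      rw [← h0, div_zero, hz0] at hlt
      exact lt_irrefl _ hlt
    · have hcFGpos : (0:ℝ) < cF * cG := lt_of_lt_of_le h0 hcFG
      rcases le_or_gt 0 (αF * αG) with hα | hα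
      · have hdiv : αF * αG / (cF * cG) ≤ αF * αG / cJ := by
          apply div_le_div_of_nonneg_left hα h0 hcFG
        linarith
      · have hneg : αF * αG / (cF * cG) < 0 := div_neg_of_neg_of_pos hα hcFGpos
        have : (0:ℝ) ≤ pColl pF fnF z z' * pColl pG fnG z z' := mul_nonneg h0F h0G
        linarith
  have hnonneg : ∀ z' : Z, 0 ≤ pColl pJ fnJ z z' := fun z' => pColl_nonneg pJ fnJ hpJ0 z z'
  calc ∑ z' ∈ SJ, pColl pJ fnJ z z'
      ≤ ∑ z' ∈ SF ∪ SG, pColl pJ fnJ z z' :=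
        Finset.sum_le_sum_of_subset_of_nonneg hsub (fun z' _ _ => hnonneg z')
    _ ≤ (∑ z' ∈ SF, pColl pJ fnJ z z') + ∑ z' ∈ SG, pColl pJ fnJ z z' := by
        have h := Finset.sum_union_inter (s₁ := SF) (s₂ := SG)
          (f := fun z' => pColl pJ fnJ z z')
        have hint : 0 ≤ ∑ z' ∈ SF ∩ SG, pColl pJ fnJ z z' :=
          Finset.sum_nonneg (fun z' _ => hnonneg z')
        linarith
    _ ≤ βF + βG := by
        have hSFb : ∑ z' ∈ SF, pColl pJ fnJ z z' ≤ ∑ z' ∈ SF, pColl pF fnF z z' := by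
          apply Finset.sum_le_sum
          intro z' _
          rw [hprod]
          calc pColl pF fnF z z' * pColl pG fnG z z'
              ≤ pColl pF fnF z z' * 1 :=
                mul_le_mul_of_nonneg_left (pColl_le_one pG fnG hpG0 hpG1 z z')
                  (pColl_nonneg pF fnF hpF0 z z')
            _ = pColl pF fnF z z' := mul_one _
        have hSGb : ∑ z' ∈ SG, pColl pJ fnJ z z' ≤ ∑ z' ∈ SG, pColl pG fnG z z' := by
          apply Finset.sum_le_sum
          intro z' _
          rw [hprod]
          calc pColl pF fnF z z' * pColl pG fnG z z'
              ≤ 1 * pColl pG fnG z z' :=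
                mul_le_mul_of_nonneg_right (pColl_le_one pF fnF hpF0 hpF1 z z')
                  (pColl_nonneg pG fnG hpG0 z z')
            _ = pColl pG fnG z z' := one_mul _
        have hFz := hF z
        have hGz := hG z
        rw [← hSF] at hFz
        rw [← hSG] at hGz
        linarith
end

section
/- Optimality of the stochastic decision within factor two: let U and V be random variables on countable sets 𝒰 and 𝒱 with joint probability mass function μ_{UV}, and let μ_{U|V}(u|v) = μ_{UV}(u,v)/μ_V(v) (for v with μ_V(v) > 0). Then for any conditional probability distribution μ_{Ǔ|V} on 𝒰 given 𝒱 (i.e. μ_{Ǔ|V}(·|v) is a probability distribution on 𝒰 for each v), Σ_{u∈𝒰, v∈𝒱, û∈𝒰 : û ≠ u} μ_{UV}(u,v) · μ_{U|V}(û|v) ≤ 2 · Σ_{u∈𝒰, v∈𝒱, ǔ∈𝒰 : ǔ ≠ u} μ_{UV}(u,v) · μ_{Ǔ|V}(ǔ|v). That is, the decision error probability of the stochastic decision rule that guesses Û ∼ μ_{U|V}(·|V) is at most twice the decision error probability of any (possibly stochastic) decision rule. -/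
attribute [local instance] Classical.propDecidable

open Function

private lemma tsum_ite_ne {U : Type*} [Countable U] (f : U → ℝ) (hf : Summable f) (u : U) :
    (∑' x, (if x ≠ u then f x else 0)) = (∑' x, f x) - f u := by
  have h1 : ∀ x, (if x ≠ u then f x else 0) = f x - (if x = u then f u else 0) := by
    intro x; by_cases h : x = u <;> simp [h]
  rw [tsum_congr h1, Summable.tsum_sub hf ((hasSum_ite_eq u (f u)).summable), tsum_ite_eq]

private lemma perv {U : Type*} [Countable U] (p : U → ℝ) (hp0 : ∀ u, 0 ≤ p u)
    (hp : Summable p) (q : U → ℝ) (hq0 : ∀ u, 0 ≤ q u) (hq : HasSum q 1) :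
    (∑' (u : U) (uh : U), if uh ≠ u then p u * (p uh / ∑' u' : U, p u') else 0)
      ≤ 2 * ∑' (u : U) (uc : U), if uc ≠ u then p u * q uc else 0 := by
  have hU : Nonempty U := by
    by_contra h
    rw [not_nonempty_iff] at h
    have h0 := hq.tsum_eq
    rw [tsum_empty] at h0
    norm_num at h0
  set P : ℝ := ∑' u', p u' with hPdef
  have hP0 : 0 ≤ P := tsum_nonneg hp0
  have hple : ∀ u, p u ≤ P := fun u => Summable.le_tsum hp u (fun u' _ => hp0 u')
  have hq1 : ∀ u, q u ≤ 1 := by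
    intro u
    have := Summable.le_tsum hq.summable u (fun u' _ => hq0 u')
    rwa [hq.tsum_eq] at this
  -- RHS nonneg
  have hRnn : 0 ≤ ∑' (u : U) (uc : U), if uc ≠ u then p u * q uc else 0 :=
    tsum_nonneg fun u => tsum_nonneg fun uc => by
      split <;> [exact mul_nonneg (hp0 u) (hq0 uc); rfl]
  rcases eq_or_lt_of_le hP0 with hP | hP
  · -- P = 0, so p ≡ 0 and LHS = 0
    have hpz : ∀ u, p u = 0 := fun u => le_antisymm (hP ▸ hple u) (hp0 u)
    have : (∑' (u : U) (uh : U), if uh ≠ u then p u * (p uh / P) else 0) = 0 := by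
      simp [hpz]
    rw [this]
    positivity
  -- P > 0
  have hPne : P ≠ 0 := ne_of_gt hP
  -- summability facts
  have hpsq : Summable fun u => p u * (p u / P) := by
    apply hp.of_nonneg_of_le (fun u => mul_nonneg (hp0 u) (div_nonneg (hp0 u) hP0))
    intro u
    calc p u * (p u / P) ≤ p u * 1 := by
          apply mul_le_mul_of_nonneg_left _ (hp0 u)
          exact div_le_one_of_le₀ (hple u) hP0
      _ = p u := mul_one _
  have hpq : Summable fun u => p u * q u := by
    apply hp.of_nonneg_of_le (fun u => mul_nonneg (hp0 u) (hq0 u))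
    intro u
    calc p u * q u ≤ p u * 1 := mul_le_mul_of_nonneg_left (hq1 u) (hp0 u)
      _ = p u := mul_one _
  -- compute LHS
  have hinnerL : ∀ u : U, (∑' uh, if uh ≠ u then p u * (p uh / P) else 0)
      = p u - p u * (p u / P) := by
    intro u
    have hs : Summable fun uh => p u * (p uh / P) := (hp.div_const P).mul_left (p u)
    rw [tsum_ite_ne _ hs u, tsum_mul_left, tsum_div_const, div_self hPne, mul_one]
  have hinnerR : ∀ u : U, (∑' uc, if uc ≠ u then p u * q uc else 0)
      = p u - p u * q u := by
    intro u
    have hs : Summable fun uc => p u * q uc := hq.summable.mul_left (p u)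
    rw [tsum_ite_ne _ hs u, tsum_mul_left, hq.tsum_eq, mul_one]
  rw [tsum_congr hinnerL, tsum_congr hinnerR, Summable.tsum_sub hp hpsq, Summable.tsum_sub hp hpq]
  set S2 : ℝ := ∑' u, p u * (p u / P) with hS2def
  set Spq : ℝ := ∑' u, p u * q u with hSpqdef
  -- sup of p
  have hbdd : BddAbove (Set.range p) := ⟨P, by rintro x ⟨u, rfl⟩; exact hple u⟩
  set m : ℝ := ⨆ u, p u with hmdef
  have hpm : ∀ u, p u ≤ m := fun u => le_ciSup hbdd u
  have hmP : m ≤ P := ciSup_le hple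
  have hm0 : 0 ≤ m := le_trans (hp0 (Classical.arbitrary U)) (hpm _)
  have hS2nn : 0 ≤ S2 := tsum_nonneg fun u => mul_nonneg (hp0 u) (div_nonneg (hp0 u) hP0)
  -- Spq ≤ m
  have hSpqm : Spq ≤ m := by
    have h1 : Spq ≤ ∑' u, m * q u := by
      apply Summable.tsum_le_tsum _ hpq (hq.summable.mul_left m)
      intro u
      exact mul_le_mul_of_nonneg_right (hpm u) (hq0 u)
    calc Spq ≤ ∑' u, m * q u := h1
      _ = m * 1 := by rw [tsum_mul_left, hq.tsum_eq]
      _ = m := mul_one m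
  -- m^2 ≤ S2 * P
  have hm2 : m * m ≤ S2 * P := by
    have hkey : ∀ u, p u ≤ Real.sqrt (S2 * P) := by
      intro u
      have h1 : p u * (p u / P) ≤ S2 :=
        Summable.le_tsum hpsq u (fun u' _ => mul_nonneg (hp0 u') (div_nonneg (hp0 u') hP0))
      have h2 : p u * p u ≤ S2 * P := by
        have := mul_le_mul_of_nonneg_right h1 hP0
        calc p u * p u = p u * (p u / P) * P := by field_simp
          _ ≤ S2 * P := this
      calc p u = Real.sqrt (p u * p u) := (Real.sqrt_mul_self (hp0 u)).symm
        _ ≤ Real.sqrt (S2 * P) := Real.sqrt_le_sqrt h2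
    have hmsqrt : m ≤ Real.sqrt (S2 * P) := ciSup_le hkey
    calc m * m ≤ Real.sqrt (S2 * P) * Real.sqrt (S2 * P) :=
          mul_le_mul hmsqrt hmsqrt hm0 (Real.sqrt_nonneg _)
      _ = S2 * P := Real.mul_self_sqrt (mul_nonneg hS2nn hP0)
  -- conclude
  have h2Spq : 2 * (P * Spq) ≤ P * P + S2 * P := by
    nlinarith [sq_nonneg (m - P), mul_le_mul_of_nonneg_left hSpqm hP0]
  change P - S2 ≤ 2 * (P - Spq)
  nlinarith [hP, h2Spq]

/-- Optimality of the stochastic decision within factor two: the error probability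
of the stochastic decision rule Û ∼ μ_{U|V}(·|V) is at most twice the error
probability of any (possibly stochastic) decision rule μ_{Ǔ|V}. -/
theorem stmt19 {U V : Type*} [Countable U] [Countable V]
    (μ : U × V → ℝ) (hμ0 : ∀ x, 0 ≤ μ x) (hμ1 : HasSum μ 1)
    (ν : U → V → ℝ) (hν0 : ∀ u v, 0 ≤ ν u v)
    (hν1 : ∀ v, HasSum (fun u => ν u v) 1) :
    (∑' (u : U) (v : V) (uh : U),
        if uh ≠ u then μ (u, v) * (μ (uh, v) / ∑' u' : U, μ (u', v)) else 0)
      ≤ 2 * ∑' (u : U) (v : V) (uc : U),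
          if uc ≠ u then μ (u, v) * ν uc v else 0 := by
  rcases isEmpty_or_nonempty V with hV | hV
  · simp [tsum_empty]
  have hU : Nonempty U := by
    by_contra h
    rw [not_nonempty_iff] at h
    have h0 := (hν1 (Classical.arbitrary V)).tsum_eq
    rw [tsum_empty] at h0
    norm_num at h0
  have hslice : ∀ v : V, Summable (fun u => μ (u, v)) := fun v =>
    hμ1.summable.comp_injective (i := fun u => (u, v)) (fun x y hxy => by simpa using hxy)
  set g : U → V → ℝ := fun u v =>
    ∑' uh : U, if uh ≠ u then μ (u, v) * (μ (uh, v) / ∑' u' : U, μ (u', v)) else 0 with hgdef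
  set h : U → V → ℝ := fun u v =>
    ∑' uc : U, if uc ≠ u then μ (u, v) * ν uc v else 0 with hhdef
  have hg0 : ∀ u v, 0 ≤ g u v := fun u v =>
    tsum_nonneg fun uh => by
      split
      · exact mul_nonneg (hμ0 _) (div_nonneg (hμ0 _) (tsum_nonneg fun u' => hμ0 _))
      · rfl
  have hh0 : ∀ u v, 0 ≤ h u v := fun u v =>
    tsum_nonneg fun uc => by
      split
      · exact mul_nonneg (hμ0 _) (hν0 _ _)
      · rfl
  have hgle : ∀ u v, g u v ≤ μ (u, v) := by
    intro u v
    set Pv : ℝ := ∑' u' : U, μ (u', v) with hPv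
    have hPv0 : 0 ≤ Pv := tsum_nonneg fun u' => hμ0 _
    have hbig : Summable fun uh => μ (u, v) * (μ (uh, v) / Pv) :=
      ((hslice v).div_const Pv).mul_left _
    have h1 : g u v ≤ ∑' uh, μ (u, v) * (μ (uh, v) / Pv) := by
      apply Summable.tsum_le_tsum _ _ hbig
      · intro uh
        split
        · exact le_refl _
        · exact mul_nonneg (hμ0 _) (div_nonneg (hμ0 _) hPv0)
      · apply hbig.of_nonneg_of_le _ (fun uh => ?_)
        · intro uh
          split
          · exact mul_nonneg (hμ0 _) (div_nonneg (hμ0 _) hPv0)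
          · rfl
        · split
          · exact le_refl _
          · exact mul_nonneg (hμ0 _) (div_nonneg (hμ0 _) hPv0)
    have h2 : (∑' uh, μ (u, v) * (μ (uh, v) / Pv)) = μ (u, v) * (Pv / Pv) := by
      rw [tsum_mul_left, tsum_div_const]
    rcases eq_or_ne Pv 0 with hz | hz
    · calc g u v ≤ _ := h1
        _ = μ (u, v) * (Pv / Pv) := h2
        _ ≤ μ (u, v) := by rw [hz]; simp [hμ0 (u, v)]
    · calc g u v ≤ _ := h1
        _ = μ (u, v) * (Pv / Pv) := h2
        _ = μ (u, v) := by rw [div_self hz, mul_one]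
  have hhle : ∀ u v, h u v ≤ μ (u, v) := by
    intro u v
    have hbig : Summable fun uc => μ (u, v) * ν uc v := (hν1 v).summable.mul_left _
    have h1 : h u v ≤ ∑' uc, μ (u, v) * ν uc v := by
      apply Summable.tsum_le_tsum _ _ hbig
      · intro uc
        split
        · exact le_refl _
        · exact mul_nonneg (hμ0 _) (hν0 _ _)
      · apply hbig.of_nonneg_of_le _ (fun uc => ?_)
        · intro uc
          split
          · exact mul_nonneg (hμ0 _) (hν0 _ _)
          · rfl
        · split
          · exact le_refl _
          · exact mul_nonneg (hμ0 _) (hν0 _ _)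
    calc h u v ≤ ∑' uc, μ (u, v) * ν uc v := h1
      _ = μ (u, v) * 1 := by rw [tsum_mul_left, (hν1 v).tsum_eq]
      _ = μ (u, v) := mul_one _
  have hG : Summable (Function.uncurry g) := by
    apply hμ1.summable.of_nonneg_of_le (fun x => hg0 x.1 x.2)
    intro x
    exact hgle x.1 x.2
  have hH : Summable (Function.uncurry h) := by
    apply hμ1.summable.of_nonneg_of_le (fun x => hh0 x.1 x.2)
    intro x
    exact hhle x.1 x.2
  have hGcol : Summable fun v => ∑' u, g u v :=
    (hG.prod_symm.hasSum.prod_fiberwise fun v => (hG.prod_symm.prod_factor v).hasSum).summable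
  have hHcol : Summable fun v => ∑' u, h u v :=
    (hH.prod_symm.hasSum.prod_fiberwise fun v => (hH.prod_symm.prod_factor v).hasSum).summable
  have hcommG : (∑' (u : U) (v : V), g u v) = ∑' (v : V) (u : U), g u v := (Summable.tsum_comm hG).symm
  have hcommH : (∑' (u : U) (v : V), h u v) = ∑' (v : V) (u : U), h u v := (Summable.tsum_comm hH).symm
  have key : ∀ v : V, (∑' u, g u v) ≤ 2 * ∑' u, h u v := by
    intro v
    exact perv (fun u => μ (u, v)) (fun u => hμ0 _) (hslice v)
      (fun u => ν u v) (fun u => hν0 u v) (hν1 v)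
  calc (∑' (u : U) (v : V), g u v) = ∑' (v : V) (u : U), g u v := hcommG
    _ ≤ ∑' (v : V), 2 * ∑' (u : U), h u v := Summable.tsum_le_tsum key hGcol (hHcol.mul_left 2)
    _ = 2 * ∑' (v : V) (u : U), h u v := tsum_mul_left
    _ = 2 * ∑' (u : U) (v : V), h u v := by rw [hcommH]
end
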